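/- arXiv:2102.07551 — 2 statements merged into one kernel-verified Lean document; each statement's English description precedes it below -/
import Mathlib

section
/- Let a < b be real numbers, N ≥ 1 an integer, ω ∈ ℝ, and set Ω = ω(b−a), h' = 1/N, and assume Ωh' ∉ ℤ. Let Ĉ_0, …, Ĉ_N be the Theorem-6 optimal coefficients on [0,1] for the frequency Ω (as defined in the context), and define C_{β,ω}[a,b] = (b−a)·e^{2πiωa}·Ĉ_β for β = 0, …, N. Then ∑_{β=0}^{N} C_{β,ω}[a,b]·e^{−β/N} = (b−a)·e^{2πiωa}·(e^{2πiΩ−1} − 1)/(2πiΩ − 1) = ∫_a^b e^{2πiωx}·e^{−(x−a)/(b−a)} dx, i.e. the quadrature formula on [a,b] obtained by the linear transformation x = (b−a)y + a is exact for the function e^{−(x−a)/(b−a)}. -/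
set_option maxHeartbeats 1000000 in
lemma key18 (z E L tw K ZN LN EN a1 b1 : ℂ)
    (hE0 : E ≠ 0) (hEN0 : EN ≠ 0)
    (hL0 : L ≠ 0) (hL1 : L - 1 ≠ 0) (hLN2 : 1 - LN ^ 2 ≠ 0) (hLN0 : LN ≠ 0)
    (htw : tw ≠ 0) (htw1 : tw - 1 ≠ 0) (hE1 : E - 1 ≠ 0) (hz1 : z - 1 ≠ 0)
    (hEz : E - z ≠ 0) (hLE : L * E - 1 ≠ 0) (hEL : E - L ≠ 0)
    (ha1 : a1 = ((L - 1) * (L - E) / (L * (1 - LN ^ 2))) *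
      ((1 - LN * ZN) / (tw * (tw - 1) * (E - 1)) +
        K * LN * (EN - ZN) * z / ((z - 1) * (E - z))))
    (hb1 : b1 = ((L - 1) * (1 - L * E) / (L * (1 - LN ^ 2))) *
      ((LN - ZN) / (tw * (tw - 1) * (E - 1)) +
        K * (EN - ZN) * z / ((z - 1) * (E - z)))) :
    (K * z / (z - 1) - 1 / tw + a1 * L / (L - 1) + b1 * LN / (1 - L))
      + (K * ((z * EN - ZN * E) / ((E - z) * EN))
        + a1 * ((L * EN - LN * E) / ((E - L) * EN))
        + b1 * ((LN * EN - L * E) / ((L * E - 1) * EN)))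
      + (K * (ZN * E / (E - z) + z * EN * (1 - E) / ((z - 1) * (E - z)))
        + ZN / (tw - 1) + a1 * LN * E / (E - L) + b1 * L * E / (L * E - 1)) / EN
      = (ZN / EN - 1) / (tw - 1) := by
  have hL1' : 1 - L ≠ 0 := by intro hc; apply hL1; linear_combination -hc
  have eK : z / (z - 1) + (z * EN - ZN * E) / ((E - z) * EN)
      + (ZN * E / (E - z) + z * EN * (1 - E) / ((z - 1) * (E - z))) / EN = 0 := by
    field_simp
    ring
  have bA : L / (L - 1) + (L * EN - LN * E) / ((E - L) * EN) + LN * E / (E - L) / EN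
      = L * (E - 1) / ((L - 1) * (E - L)) := by
    field_simp
    ring
  have bB : LN / (1 - L) + (LN * EN - L * E) / ((L * E - 1) * EN)
      + L * E / (L * E - 1) / EN
      = LN * L * (E - 1) / ((1 - L) * (L * E - 1)) := by
    field_simp
    ring
  have pa : ((L - 1) * (L - E) / (L * (1 - LN ^ 2))) * (L * (E - 1) / ((L - 1) * (E - L)))
      = -((E - 1) / (1 - LN ^ 2)) := by
    field_simp
    ring
  have pb : ((L - 1) * (1 - L * E) / (L * (1 - LN ^ 2)))
        * (LN * L * (E - 1) / ((1 - L) * (L * E - 1)))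
      = LN * (E - 1) / (1 - LN ^ 2) := by
    field_simp
    ring
  have hD1 : (1 - LN ^ 2) * (tw * (tw - 1) * (E - 1)) ≠ 0 :=
    mul_ne_zero hLN2 (mul_ne_zero (mul_ne_zero htw htw1) hE1)
  have hD2 : tw * (tw - 1) ≠ 0 := mul_ne_zero htw htw1
  have fin3 : ((1 - E) / (1 - LN ^ 2)) * ((1 - LN * ZN) / (tw * (tw - 1) * (E - 1)))
      + (LN * (E - 1) / (1 - LN ^ 2)) * ((LN - ZN) / (tw * (tw - 1) * (E - 1)))
      = -1 / (tw * (tw - 1)) := by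
    rw [div_mul_div_comm, div_mul_div_comm, ← add_div, div_eq_div_iff hD1 hD2]
    ring
  have fin : (-((E - 1) / (1 - LN ^ 2))) *
        ((1 - LN * ZN) / (tw * (tw - 1) * (E - 1)) +
          K * LN * (EN - ZN) * z / ((z - 1) * (E - z)))
      + (LN * (E - 1) / (1 - LN ^ 2)) *
        ((LN - ZN) / (tw * (tw - 1) * (E - 1)) +
          K * (EN - ZN) * z / ((z - 1) * (E - z)))
      = -1 / (tw * (tw - 1)) := by
    calc (-((E - 1) / (1 - LN ^ 2))) *
        ((1 - LN * ZN) / (tw * (tw - 1) * (E - 1)) +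
          K * LN * (EN - ZN) * z / ((z - 1) * (E - z)))
      + (LN * (E - 1) / (1 - LN ^ 2)) *
        ((LN - ZN) / (tw * (tw - 1) * (E - 1)) +
          K * (EN - ZN) * z / ((z - 1) * (E - z)))
        = ((1 - E) / (1 - LN ^ 2)) * ((1 - LN * ZN) / (tw * (tw - 1) * (E - 1)))
          + (LN * (E - 1) / (1 - LN ^ 2)) * ((LN - ZN) / (tw * (tw - 1) * (E - 1))) := by
            ring
      _ = -1 / (tw * (tw - 1)) := fin3
  have eAB : a1 * (L * (E - 1) / ((L - 1) * (E - L)))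
      + b1 * (LN * L * (E - 1) / ((1 - L) * (L * E - 1)))
      = -1 / (tw * (tw - 1)) := by
    calc a1 * (L * (E - 1) / ((L - 1) * (E - L)))
        + b1 * (LN * L * (E - 1) / ((1 - L) * (L * E - 1)))
        = (((L - 1) * (L - E) / (L * (1 - LN ^ 2))) * (L * (E - 1) / ((L - 1) * (E - L))))
            * ((1 - LN * ZN) / (tw * (tw - 1) * (E - 1)) +
              K * LN * (EN - ZN) * z / ((z - 1) * (E - z)))
          + (((L - 1) * (1 - L * E) / (L * (1 - LN ^ 2)))
              * (LN * L * (E - 1) / ((1 - L) * (L * E - 1))))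
            * ((LN - ZN) / (tw * (tw - 1) * (E - 1)) +
              K * (EN - ZN) * z / ((z - 1) * (E - z))) := by rw [ha1, hb1]; ring
      _ = -1 / (tw * (tw - 1)) := by rw [pa, pb]; exact fin
  calc (K * z / (z - 1) - 1 / tw + a1 * L / (L - 1) + b1 * LN / (1 - L))
      + (K * ((z * EN - ZN * E) / ((E - z) * EN))
        + a1 * ((L * EN - LN * E) / ((E - L) * EN))
        + b1 * ((LN * EN - L * E) / ((L * E - 1) * EN)))
      + (K * (ZN * E / (E - z) + z * EN * (1 - E) / ((z - 1) * (E - z)))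
        + ZN / (tw - 1) + a1 * LN * E / (E - L) + b1 * L * E / (L * E - 1)) / EN
      = K * (z / (z - 1) + (z * EN - ZN * E) / ((E - z) * EN)
          + (ZN * E / (E - z) + z * EN * (1 - E) / ((z - 1) * (E - z))) / EN)
        + (a1 * (L / (L - 1) + (L * EN - LN * E) / ((E - L) * EN) + LN * E / (E - L) / EN)
          + b1 * (LN / (1 - L) + (LN * EN - L * E) / ((L * E - 1) * EN)
            + L * E / (L * E - 1) / EN))
        + (-(1 / tw) + ZN / (tw - 1) / EN) := by ring
    _ = K * 0 + (a1 * (L * (E - 1) / ((L - 1) * (E - L)))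
          + b1 * (LN * L * (E - 1) / ((1 - L) * (L * E - 1))))
        + (-(1 / tw) + ZN / (tw - 1) / EN) := by rw [eK, bA, bB]
    _ = -1 / (tw * (tw - 1)) + (-(1 / tw) + ZN / (tw - 1) / EN) := by rw [eAB]; ring
    _ = (ZN / EN - 1) / (tw - 1) := by field_simp; ring

set_option maxHeartbeats 1000000 in
theorem stmt18
    (a b : ℝ) (hab : a < b) (N : ℕ) (hN : 1 ≤ N) (ω : ℝ)
    (Ω : ℝ) (hΩ : Ω = ω * (b - a)) (h : ℝ) (hh : h = 1 / N)
    (hfreq : ∀ k : ℤ, Ω * h ≠ (k : ℝ))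
    (p lam : ℝ) (hp : p = 1 + 2 * h * Real.exp h - Real.exp (2 * h))
    (hroot : p * lam ^ 2 - 2 * (1 - Real.exp (2 * h) + h * (Real.exp (2 * h) + 1)) * lam + p = 0)
    (hlam : |lam| < 1) (hlam0 : lam ≠ 0) (hlam2N : 1 - lam ^ (2 * N) ≠ 0)
    (K a1 b1 : ℂ)
    (hK : K = (Complex.exp (h : ℂ) - Complex.exp ((2 * (Real.pi : ℂ) * Complex.I * (Ω : ℂ)) * (h : ℂ))) * (1 - Complex.exp ((2 * (Real.pi : ℂ) * Complex.I * (Ω : ℂ)) * (h : ℂ) + (h : ℂ))) * (1 - Complex.exp ((2 * (Real.pi : ℂ) * Complex.I * (Ω : ℂ)) * (h : ℂ))) ^ 2 / (2 * (Real.pi : ℂ) ^ 2 * (Ω : ℂ) ^ 2 * (4 * (Real.pi : ℂ) ^ 2 * (Ω : ℂ) ^ 2 + 1) * Complex.exp ((2 * (Real.pi : ℂ) * Complex.I * (Ω : ℂ)) * (h : ℂ)) * ((1 - Complex.exp (2 * (h : ℂ))) * (1 - Complex.exp ((2 * (Real.pi : ℂ) * Complex.I * (Ω : ℂ)) * (h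 : ℂ))) ^ 2 + 2 * (h : ℂ) * (Complex.exp (h : ℂ) - Complex.exp ((2 * (Real.pi : ℂ) * Complex.I * (Ω : ℂ)) * (h : ℂ))) * (1 - Complex.exp ((2 * (Real.pi : ℂ) * Complex.I * (Ω : ℂ)) * (h : ℂ) + (h : ℂ))))))
    (ha1 : a1 = (((lam : ℂ) - 1) * ((lam : ℂ) - Complex.exp (h : ℂ)) / ((lam : ℂ) * (1 - (lam : ℂ) ^ (2 * N)))) * ((1 - (lam : ℂ) ^ N * Complex.exp (2 * (Real.pi : ℂ) * Complex.I * (Ω : ℂ))) / ((2 * (Real.pi : ℂ) * Complex.I * (Ω : ℂ)) * ((2 * (Real.pi : ℂ) * Complex.I * (Ω : ℂ)) - 1) * (Complex.exp (h : ℂ) - 1)) + K * (lam : ℂ) ^ N * (Complex.exp 1 - Complex.exp (2 * (Real.pi : ℂ) * Complex.I * (Ω : ℂ))) * Complex.exp ((2 * (Real.pi : ℂ) * Complex.I * (Ω : ℂ)) * (h : ℂ)) / ((Complex.exp ((2 * (Real.pi : ℂ) * Complex.I * (Ω : ℂ)) * (h : ℂ)) - 1) * (Complex.exp (h : ℂ)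 - Complex.exp ((2 * (Real.pi : ℂ) * Complex.I * (Ω : ℂ)) * (h : ℂ))))))
    (hb1 : b1 = (((lam : ℂ) - 1) * (1 - (lam : ℂ) * Complex.exp (h : ℂ)) / ((lam : ℂ) * (1 - (lam : ℂ) ^ (2 * N)))) * (((lam : ℂ) ^ N - Complex.exp (2 * (Real.pi : ℂ) * Complex.I * (Ω : ℂ))) / ((2 * (Real.pi : ℂ) * Complex.I * (Ω : ℂ)) * ((2 * (Real.pi : ℂ) * Complex.I * (Ω : ℂ)) - 1) * (Complex.exp (h : ℂ) - 1)) + K * (Complex.exp 1 - Complex.exp (2 * (Real.pi : ℂ) * Complex.I * (Ω : ℂ))) * Complex.exp ((2 * (Real.pi : ℂ) * Complex.I * (Ω : ℂ)) * (h : ℂ)) / ((Complex.exp ((2 * (Real.pi : ℂ) * Complex.I * (Ω : ℂ)) * (h : ℂ)) - 1) * (Complex.exp (h : ℂ) - Complex.exp ((2 * (Real.pi : ℂ) * Complex.I * (Ω : ℂ)) * (h : ℂ))))))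
    (C : ℕ → ℂ)
    (hC0 : C 0 = K * Complex.exp ((2 * (Real.pi : ℂ) * Complex.I * (Ω : ℂ)) * (h : ℂ)) / (Complex.exp ((2 * (Real.pi : ℂ) * Complex.I * (Ω : ℂ)) * (h : ℂ)) - 1) - 1 / (2 * (Real.pi : ℂ) * Complex.I * (Ω : ℂ)) + a1 * (lam : ℂ) / ((lam : ℂ) - 1) + b1 * (lam : ℂ) ^ N / (1 - (lam : ℂ)))
    (hCmid : ∀ β : ℕ, 1 ≤ β → β ≤ N - 1 → C β = Complex.exp ((2 * (Real.pi : ℂ) * Complex.I * (Ω : ℂ)) * (h : ℂ) * (β : ℂ)) * K + a1 * (lam : ℂ) ^ β + b1 * (lam : ℂ) ^ (N - β))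
    (hCN : C N = K * (Complex.exp (2 * (Real.pi : ℂ) * Complex.I * (Ω : ℂ)) * Complex.exp (h : ℂ) / (Complex.exp (h : ℂ) - Complex.exp ((2 * (Real.pi : ℂ) * Complex.I * (Ω : ℂ)) * (h : ℂ))) + Complex.exp ((2 * (Real.pi : ℂ) * Complex.I * (Ω : ℂ)) * (h : ℂ) + 1) * (1 - Complex.exp (h : ℂ)) / ((Complex.exp ((2 * (Real.pi : ℂ) * Complex.I * (Ω : ℂ)) * (h : ℂ)) - 1) * (Complex.exp (h : ℂ) - Complex.exp ((2 * (Real.pi : ℂ) * Complex.I * (Ω : ℂ)) * (h : ℂ))))) + Complex.exp (2 * (Real.pi : ℂ) * Complex.I * (Ω : ℂ)) / ((2 * (Real.pi : ℂ) * Complex.I * (Ω : ℂ)) - 1) + a1 * (lam : ℂ) ^ N * Complex.exp (h : ℂ) / (Complex.exp (h : ℂ) - (lam : ℂ)) + b1 * (lam : ℂ) * Complex.exp (h : ℂ) / ((lam : ℂ) * Complex.exp (h : ℂ) - 1))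
    (Cab : ℕ → ℂ)
    (hCab : ∀ β : ℕ, Cab β = ((b : ℂ) - (a : ℂ)) * Complex.exp (2 * (Real.pi : ℂ) * Complex.I * (ω : ℂ) * (a : ℂ)) * C β)
    :
    ∑ β ∈ Finset.range (N + 1), Cab β * Complex.exp (-(((β : ℝ) / (N : ℝ) : ℝ) : ℂ)) =
      ((b : ℂ) - (a : ℂ)) * Complex.exp ((2 * (Real.pi : ℂ) * Complex.I * (ω : ℂ)) * (a : ℂ)) *
        (Complex.exp ((2 * (Real.pi : ℂ) * Complex.I * (Ω : ℂ)) - 1) - 1) / ((2 * (Real.pi : ℂ) * Complex.I * (Ω : ℂ)) - 1) ∧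
    ((b : ℂ) - (a : ℂ)) * Complex.exp ((2 * (Real.pi : ℂ) * Complex.I * (ω : ℂ)) * (a : ℂ)) *
        (Complex.exp ((2 * (Real.pi : ℂ) * Complex.I * (Ω : ℂ)) - 1) - 1) / ((2 * (Real.pi : ℂ) * Complex.I * (Ω : ℂ)) - 1) =
      ∫ x in a..b, Complex.exp ((2 * (Real.pi : ℂ) * Complex.I * (ω : ℂ)) * (x : ℂ)) * Complex.exp (-(((x - a) / (b - a) : ℝ) : ℂ)) := by
  clear hK
  -- basic real facts
  have hNpos : 0 < N := hN
  have hNR : (0:ℝ) < (N:ℝ) := by exact_mod_cast hNpos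
  have hhpos : 0 < h := by rw [hh]; positivity
  have hx1 : 1 < Real.exp h := by
    rw [← Real.exp_zero]; exact Real.exp_lt_exp.mpr hhpos
  have hΩ0 : Ω ≠ 0 := by
    intro h0
    exact hfreq 0 (by rw [h0]; simp)
  have hNh : (N:ℝ) * h = 1 := by rw [hh]; field_simp
  have hlamlt : lam < 1 := (abs_lt.mp hlam).2
  -- abbreviations
  set tw : ℂ := 2 * (Real.pi : ℂ) * Complex.I * (Ω : ℂ) with htwdef
  set z : ℂ := Complex.exp (tw * (h : ℂ)) with hzdef
  set E : ℂ := Complex.exp ((h : ℂ)) with hEdef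
  set EN : ℂ := Complex.exp 1 with hENdef
  set ZN : ℂ := Complex.exp tw with hZNdef
  set L : ℂ := ((lam : ℂ)) with hLdef
  set LN : ℂ := L ^ N with hLNdef
  have htwI : tw = ((2 * Real.pi * Ω : ℝ) : ℂ) * Complex.I := by
    rw [htwdef]; push_cast; ring
  have h2πI : (2 * (Real.pi:ℂ) * Complex.I) ≠ 0 :=
    mul_ne_zero (mul_ne_zero two_ne_zero (Complex.ofReal_ne_zero.mpr Real.pi_ne_zero))
      Complex.I_ne_zero
  have htwc : tw ≠ 0 := by
    rw [htwI]
    exact mul_ne_zero (Complex.ofReal_ne_zero.mpr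
      (mul_ne_zero (mul_ne_zero two_ne_zero Real.pi_ne_zero) hΩ0)) Complex.I_ne_zero
  have htw1c : tw - 1 ≠ 0 := by
    intro hc
    have h1 : tw = 1 := by linear_combination hc
    have h2 := congrArg Complex.re h1
    rw [htwI] at h2
    simp at h2
  have hE0 : E ≠ 0 := Complex.exp_ne_zero _
  have hEN0 : EN ≠ 0 := Complex.exp_ne_zero _
  have hL0c : L ≠ 0 := Complex.ofReal_ne_zero.mpr hlam0
  have hL1c : L - 1 ≠ 0 := by
    rw [hLdef]
    intro hc
    have : ((lam - 1 : ℝ) : ℂ) = 0 := by push_cast; linear_combination hc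
    have := Complex.ofReal_eq_zero.mp this
    linarith
  have hLN0c : LN ≠ 0 := by rw [hLNdef]; exact pow_ne_zero _ hL0c
  have hcast2N : (1:ℂ) - L ^ (2 * N) ≠ 0 := by
    rw [hLdef]
    intro hc
    apply hlam2N
    have : ((1 - lam ^ (2*N) : ℝ) : ℂ) = 0 := by push_cast; linear_combination hc
    exact_mod_cast this
  have hLN2c : (1:ℂ) - LN ^ 2 ≠ 0 := by
    rw [hLNdef, ← pow_mul, Nat.mul_comm]
    exact hcast2N
  have hE1c : E - 1 ≠ 0 := by
    rw [hEdef, ← Complex.ofReal_exp, ← Complex.ofReal_one, ← Complex.ofReal_sub]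
    exact Complex.ofReal_ne_zero.mpr (by linarith)
  have hELc : E - L ≠ 0 := by
    rw [hEdef, hLdef, ← Complex.ofReal_exp, ← Complex.ofReal_sub]
    exact Complex.ofReal_ne_zero.mpr (by linarith)
  have hz1c : z - 1 ≠ 0 := by
    intro hc
    have h1 : z = 1 := by linear_combination hc
    rw [hzdef, Complex.exp_eq_one_iff] at h1
    obtain ⟨n, hn⟩ := h1
    rw [htwdef] at hn
    have h2 : ((Ω * h : ℝ) : ℂ) = ((n : ℝ) : ℂ) := by
      apply mul_left_cancel₀ h2πI
      push_cast
      linear_combination hn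
    exact hfreq n (by exact_mod_cast h2)
  have htwhre : (tw * (h : ℂ)).re = 0 := by
    have : tw * (h : ℂ) = ((2 * Real.pi * Ω * h : ℝ) : ℂ) * Complex.I := by
      rw [htwdef]; push_cast; ring
    rw [this]
    simp
  have hEzc : E - z ≠ 0 := by
    intro hc
    have h1 : E = z := by linear_combination hc
    have h2 := congrArg (norm : ℂ → ℝ) h1
    rw [hEdef, hzdef, Complex.norm_exp, Complex.norm_exp, htwhre, Complex.ofReal_re,
      Real.exp_zero] at h2
    have := Real.exp_eq_exp.mp (h2.trans (Real.exp_zero).symm)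
    linarith
  have hLEc : L * E - 1 ≠ 0 := by
    rw [hEdef, hLdef, ← Complex.ofReal_exp, ← Complex.ofReal_mul, ← Complex.ofReal_one,
      ← Complex.ofReal_sub, Complex.ofReal_ne_zero]
    intro hc
    have h2 : lam * Real.exp h = 1 := by linarith
    set x := Real.exp h with hxdef
    have hx0 : x ≠ 0 := by positivity
    have hlamval : lam = x⁻¹ := eq_inv_of_mul_eq_one_left (by linarith [h2] )
    have he2 : Real.exp (2*h) = x ^ 2 := by rw [two_mul, Real.exp_add, sq]
    rw [hp, he2, hlamval] at hroot
    have hinv : x * x⁻¹ = 1 := mul_inv_cancel₀ hx0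
    have hkey : (x - 1)^3 * (x + 1) = 0 := by
      linear_combination (-(x^2)) * hroot +
        ((1 + 2*h*x - x^2) * (x * x⁻¹ + 1) - 2*(1 - x^2 + h*(x^2+1)) * x) * hinv
    have hpos : 0 < (x - 1)^3 * (x + 1) := by
      have h3 : 0 < (x - 1)^3 := pow_pos (by linarith) 3
      have h4 : 0 < x + 1 := by linarith
      exact mul_pos h3 h4
    linarith [hkey, hpos]
  -- power facts
  have hNhC : (N:ℂ) * (h:ℂ) = 1 := by
    have := congrArg (fun r : ℝ => (r:ℂ)) hNh
    push_cast at this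
    exact this
  have harg : (N:ℂ) * (tw * (h:ℂ)) = tw := by
    rw [show (N:ℂ) * (tw * (h:ℂ)) = tw * ((N:ℂ) * (h:ℂ)) by ring, hNhC, mul_one]
  have hzN : z ^ N = ZN := by
    rw [hzdef, hZNdef, ← Complex.exp_nat_mul, harg]
  have hENpow : E ^ N = EN := by
    rw [hEdef, hENdef, ← Complex.exp_nat_mul, hNhC]
  -- massage a1, b1
  have hpow2N : L ^ (2 * N) = LN ^ 2 := by rw [hLNdef, ← pow_mul, Nat.mul_comm]
  have ha1' : a1 = ((L - 1) * (L - E) / (L * (1 - LN ^ 2))) *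
      ((1 - LN * ZN) / (tw * (tw - 1) * (E - 1)) +
        K * LN * (EN - ZN) * z / ((z - 1) * (E - z))) := by
    rw [ha1, hpow2N]
  have hb1' : b1 = ((L - 1) * (1 - L * E) / (L * (1 - LN ^ 2))) *
      ((LN - ZN) / (tw * (tw - 1) * (E - 1)) +
        K * (EN - ZN) * z / ((z - 1) * (E - z))) := by
    rw [hb1, hpow2N]
  -- geometric sums
  have hq1 : z * E⁻¹ ≠ 1 := by
    intro hc
    apply hEzc
    rw [sub_eq_zero]
    field_simp at hc
    first
      | exact hc.symm
      | exact hc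
      | linear_combination hc
      | linear_combination -hc
  have hq2 : L * E⁻¹ ≠ 1 := by
    intro hc
    apply hELc
    rw [sub_eq_zero]
    field_simp at hc
    first
      | exact hc.symm
      | exact hc
      | linear_combination hc
      | linear_combination -hc
  have hq3 : E⁻¹ * L⁻¹ ≠ 1 := by
    intro hc
    apply hLEc
    rw [sub_eq_zero]
    field_simp at hc
    first
      | exact hc.symm
      | exact hc
      | linear_combination hc
      | linear_combination -hc
  have g1 : ∑ β ∈ Finset.Ico 1 N, (z * E⁻¹) ^ β
      = (z * EN - ZN * E) / ((E - z) * EN) := by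
    rw [geom_sum_Ico hq1 hN, mul_pow, inv_pow, hzN, hENpow, pow_one]
    rw [div_eq_div_iff (sub_ne_zero.mpr hq1) (mul_ne_zero hEzc hEN0)]
    field_simp
    ring
  have g2 : ∑ β ∈ Finset.Ico 1 N, (L * E⁻¹) ^ β
      = (L * EN - LN * E) / ((E - L) * EN) := by
    rw [geom_sum_Ico hq2 hN, mul_pow, inv_pow, hENpow, pow_one, ← hLNdef]
    rw [div_eq_div_iff (sub_ne_zero.mpr hq2) (mul_ne_zero hELc hEN0)]
    field_simp
    ring
  have g3 : LN * ∑ β ∈ Finset.Ico 1 N, (E⁻¹ * L⁻¹) ^ β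
      = (LN * EN - L * E) / ((L * E - 1) * EN) := by
    rw [geom_sum_Ico hq3 hN, mul_pow, inv_pow, inv_pow, hENpow, pow_one, ← hLNdef]
    rw [mul_div_assoc']
    rw [div_eq_div_iff (sub_ne_zero.mpr hq3) (mul_ne_zero hLEc hEN0)]
    field_simp
    ring
  -- the middle sum
  have hmid : (∑ β ∈ Finset.Ico 1 N, C β * (E⁻¹) ^ β)
      = K * ((z * EN - ZN * E) / ((E - z) * EN))
        + a1 * ((L * EN - LN * E) / ((E - L) * EN))
        + b1 * ((LN * EN - L * E) / ((L * E - 1) * EN)) := by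
    have step : ∀ β ∈ Finset.Ico 1 N, C β * (E⁻¹) ^ β
        = K * (z * E⁻¹) ^ β + a1 * (L * E⁻¹) ^ β + b1 * (LN * (E⁻¹ * L⁻¹) ^ β) := by
      intro β hβ
      simp only [Finset.mem_Ico] at hβ
      rw [hCmid β hβ.1 (by omega)]
      have hzb : Complex.exp (tw * (h:ℂ) * (β:ℂ)) = z ^ β := by
        rw [hzdef, ← Complex.exp_nat_mul]
        congr 1
        ring
      have hLb : L ^ (N - β) = LN * (L⁻¹) ^ β := by
        rw [pow_sub₀ L hL0c (le_of_lt hβ.2), inv_pow, hLNdef]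
      rw [hzb, hLb, mul_pow z E⁻¹ β, mul_pow L E⁻¹ β, mul_pow E⁻¹ L⁻¹ β]
      ring
    rw [Finset.sum_congr rfl step, Finset.sum_add_distrib, Finset.sum_add_distrib,
      ← Finset.mul_sum, ← Finset.mul_sum, ← Finset.mul_sum, ← Finset.mul_sum, g1, g2, g3]
  -- the endpoints
  have hC0' : C 0 = K * z / (z - 1) - 1 / tw + a1 * L / (L - 1) + b1 * LN / (1 - L) := hC0
  have hCN' : C N * (E⁻¹) ^ N
      = (K * (ZN * E / (E - z) + z * EN * (1 - E) / ((z - 1) * (E - z)))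
        + ZN / (tw - 1) + a1 * LN * E / (E - L) + b1 * L * E / (L * E - 1)) / EN := by
    rw [hCN, Complex.exp_add, ← hzdef, ← hENdef, inv_pow, hENpow, ← div_eq_mul_inv]
  -- the core identity
  have hsplit : ∑ β ∈ Finset.range (N + 1), C β * (E⁻¹) ^ β
      = C 0 + (∑ β ∈ Finset.Ico 1 N, C β * (E⁻¹) ^ β) + C N * (E⁻¹) ^ N := by
    rw [Finset.sum_range_succ, Finset.range_eq_Ico,
      Finset.sum_eq_sum_Ico_succ_bot (by omega : 0 < N)]
    norm_num
  have core : ∑ β ∈ Finset.range (N + 1), C β * (E⁻¹) ^ β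
      = (ZN / EN - 1) / (tw - 1) := by
    rw [hsplit, hC0', hmid, hCN']
    exact key18 z E L tw K ZN LN EN a1 b1 hE0 hEN0 hL0c hL1c hLN2c hLN0c htwc htw1c
      hE1c hz1c hEzc hLEc hELc ha1' hb1'
  have hZNEN : ZN / EN = Complex.exp (tw - 1) := by
    rw [hZNdef, hENdef, ← Complex.exp_sub]
  -- exponent conversion
  have hNC : (N:ℂ) ≠ 0 := Nat.cast_ne_zero.mpr (by omega)
  have hexp : ∀ β : ℕ, Complex.exp (-(((β : ℝ) / (N : ℝ) : ℝ) : ℂ)) = (E⁻¹) ^ β := by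
    intro β
    rw [hEdef, ← Complex.exp_neg, ← Complex.exp_nat_mul]
    congr 1
    rw [hh]
    push_cast
    field_simp
  -- part 1
  have main1 : ∑ β ∈ Finset.range (N + 1), Cab β * Complex.exp (-(((β : ℝ) / (N : ℝ) : ℝ) : ℂ)) =
      ((b : ℂ) - (a : ℂ)) * Complex.exp ((2 * (Real.pi : ℂ) * Complex.I * (ω : ℂ)) * (a : ℂ)) *
        (Complex.exp (tw - 1) - 1) / (tw - 1) := by
    calc ∑ β ∈ Finset.range (N + 1), Cab β * Complex.exp (-(((β : ℝ) / (N : ℝ) : ℝ) : ℂ))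
        = ∑ β ∈ Finset.range (N + 1),
            ((b : ℂ) - (a : ℂ)) * Complex.exp (2 * (Real.pi : ℂ) * Complex.I * (ω : ℂ) * (a : ℂ))
              * (C β * (E⁻¹) ^ β) := by
          refine Finset.sum_congr rfl fun β _ => ?_
          rw [hCab β, hexp β]
          ring
      _ = ((b : ℂ) - (a : ℂ)) * Complex.exp (2 * (Real.pi : ℂ) * Complex.I * (ω : ℂ) * (a : ℂ))
            * ∑ β ∈ Finset.range (N + 1), C β * (E⁻¹) ^ β := by
          rw [Finset.mul_sum]
      _ = ((b : ℂ) - (a : ℂ)) * Complex.exp (2 * (Real.pi : ℂ) * Complex.I * (ω : ℂ) * (a : ℂ))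
            * ((Complex.exp (tw - 1) - 1) / (tw - 1)) := by
          rw [core, hZNEN]
      _ = ((b : ℂ) - (a : ℂ)) * Complex.exp ((2 * (Real.pi : ℂ) * Complex.I * (ω : ℂ)) * (a : ℂ)) *
          (Complex.exp (tw - 1) - 1) / (tw - 1) := by
          rw [mul_div_assoc]
  -- part 2
  have hba : (0:ℝ) < b - a := by linarith
  have hbaC : ((b:ℂ) - (a:ℂ)) ≠ 0 := by
    intro hc
    have : ((b - a : ℝ) : ℂ) = 0 := by push_cast; linear_combination hc
    have := Complex.ofReal_eq_zero.mp this
    linarith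
  have hΩC : (Ω:ℂ) = (ω:ℂ) * ((b:ℂ) - (a:ℂ)) := by
    rw [hΩ]; push_cast; ring
  set c : ℂ := 2 * (Real.pi : ℂ) * Complex.I * (ω : ℂ) - 1 / ((b:ℂ) - (a:ℂ)) with hcdef
  have hcrel : c * ((b:ℂ) - (a:ℂ)) = tw - 1 := by
    rw [hcdef, htwdef, hΩC]
    field_simp
  have hc0 : c ≠ 0 := by
    intro hc
    apply htw1c
    rw [← hcrel, hc, zero_mul]
  have hfun : ∀ x : ℝ, Complex.exp ((2 * (Real.pi : ℂ) * Complex.I * (ω : ℂ)) * (x : ℂ)) *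
      Complex.exp (-(((x - a) / (b - a) : ℝ) : ℂ))
      = Complex.exp ((a:ℂ) / ((b:ℂ) - (a:ℂ))) * Complex.exp (c * (x:ℂ)) := by
    intro x
    rw [← Complex.exp_add, ← Complex.exp_add]
    congr 1
    rw [hcdef]
    push_cast
    field_simp
    ring
  have hint : (∫ x in a..b, Complex.exp ((2 * (Real.pi : ℂ) * Complex.I * (ω : ℂ)) * (x : ℂ)) *
      Complex.exp (-(((x - a) / (b - a) : ℝ) : ℂ)))
      = Complex.exp ((a:ℂ) / ((b:ℂ) - (a:ℂ))) *
        ((Complex.exp (c * (b:ℂ)) - Complex.exp (c * (a:ℂ))) / c) := by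
    simp only [hfun]
    rw [intervalIntegral.integral_const_mul, integral_exp_mul_complex hc0]
  have e2 : Complex.exp ((a:ℂ) / ((b:ℂ) - (a:ℂ))) * Complex.exp (c * (a:ℂ))
      = Complex.exp ((2 * (Real.pi : ℂ) * Complex.I * (ω : ℂ)) * (a : ℂ)) := by
    rw [← Complex.exp_add]
    congr 1
    rw [hcdef]
    field_simp
    ring
  have e1 : Complex.exp ((a:ℂ) / ((b:ℂ) - (a:ℂ))) * Complex.exp (c * (b:ℂ))
      = Complex.exp ((2 * (Real.pi : ℂ) * Complex.I * (ω : ℂ)) * (a : ℂ)) *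
        Complex.exp (tw - 1) := by
    rw [← Complex.exp_add, ← Complex.exp_add]
    congr 1
    rw [hcdef, htwdef, hΩC]
    field_simp
    ring
  have main2 : ((b : ℂ) - (a : ℂ)) * Complex.exp ((2 * (Real.pi : ℂ) * Complex.I * (ω : ℂ)) * (a : ℂ)) *
        (Complex.exp (tw - 1) - 1) / (tw - 1) =
      ∫ x in a..b, Complex.exp ((2 * (Real.pi : ℂ) * Complex.I * (ω : ℂ)) * (x : ℂ)) *
        Complex.exp (-(((x - a) / (b - a) : ℝ) : ℂ)) := by
    rw [hint, mul_div_assoc']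
    rw [div_eq_div_iff htw1c hc0]
    linear_combination
      (Complex.exp ((2 * (Real.pi : ℂ) * Complex.I * (ω : ℂ)) * (a : ℂ))) *
        (Complex.exp (tw - 1) - 1) * hcrel
      - (tw - 1) * e1 + (tw - 1) * e2
  exact ⟨main1, main2⟩
end

section
/- Let a < b be real numbers and N ≥ 2 an integer, and let C_0, …, C_N be the coefficients of the optimal quadrature formula for ω = 0 on [0,1] as defined in the context. Define C_{β,0}[a,b] = (b−a)·C_β for β = 0, …, N. Then ∑_{β=0}^{N} C_{β,0}[a,b] = b − a = ∫_a^b 1 dx, and ∑_{β=0}^{N} C_{β,0}[a,b]·e^{−β/N} = (b−a)(1 − e^{−1}) = ∫_a^b e^{−(x−a)/(b−a)} dx; i.e. the Theorem-8 quadrature formula ∫_a^b φ(x) dx ≅ ∑_{β=0}^N C_{β,0}[a,b] φ(a + β(b−a)/N) is exact for the constant function 1 and for e^{−(x−a)/(b−a)}. -/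
lemma geomIco (x : ℝ) (N : ℕ) (hN : 1 ≤ N) :
    (x - 1) * ∑ β ∈ Finset.Ico 1 N, x ^ β = x ^ N - x := by
  have h0 : (∑ β ∈ Finset.range N, x ^ β) * (x - 1) = x ^ N - 1 := geom_sum_mul x N
  have h1 : ∑ β ∈ Finset.range N, x ^ β = x ^ 0 + ∑ β ∈ Finset.Ico 1 N, x ^ β := by
    rw [Finset.range_eq_Ico, Finset.sum_eq_sum_Ico_succ_bot hN]
  rw [h1] at h0
  nlinarith [h0]

lemma reflectIco (x : ℝ) (N : ℕ) :
    ∑ β ∈ Finset.Ico 1 N, x ^ (N - β) = ∑ β ∈ Finset.Ico 1 N, x ^ β := by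
  refine Finset.sum_nbij' (fun β => N - β) (fun β => N - β)
    (fun a ha => ?_) (fun a ha => ?_) (fun a ha => ?_) (fun a ha => ?_) (fun a ha => rfl) <;>
    simp only [Finset.mem_Ico] at * <;> omega

lemma splitSum (N : ℕ) (hN : 1 ≤ N) (f : ℕ → ℝ) :
    ∑ β ∈ Finset.range (N + 1), f β = f 0 + (∑ β ∈ Finset.Ico 1 N, f β) + f N := by
  rw [Finset.sum_range_succ, Finset.range_eq_Ico, Finset.sum_eq_sum_Ico_succ_bot hN]




theorem stmt19
    (a b : ℝ) (hab : a < b)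
    (N : ℕ) (hN : 2 ≤ N) (h : ℝ) (hh : h = 1 / N)
    (lam : ℝ)
    (hlamdef : lam = (h * (Real.exp (2 * h) + 1) - Real.exp (2 * h) + 1 - (Real.exp h - 1) * Real.sqrt (h ^ 2 * (Real.exp h + 1) ^ 2 + 2 * h * (1 - Real.exp h))) / (1 - Real.exp (2 * h) + 2 * h * Real.exp h))
    (K : ℝ)
    (hK : K = (2 * Real.exp h - 2 - h * Real.exp h - h) * (lam - 1) /
      (2 * (Real.exp h - 1) ^ 2 * (lam + lam ^ (N + 1))))
    (C : ℕ → ℝ)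
    (hC0 : C 0 = 1 - h / (Real.exp h - 1) - K * (lam - lam ^ N))
    (hCmid : ∀ β : ℕ, 1 ≤ β → β ≤ N - 1 →
      C β = h + K * ((Real.exp h - lam) * lam ^ β + (1 - lam * Real.exp h) * lam ^ (N - β)))
    (hCN : C N = -1 + Real.exp h * h / (Real.exp h - 1) - K * (lam - lam ^ N) * Real.exp h)
    (Cab : ℕ → ℝ)
    (hCab : ∀ β : ℕ, Cab β = (b - a) * C β) :
    (∑ β ∈ Finset.range (N + 1), Cab β = b - a ∧
      b - a = ∫ _x in a..b, (1 : ℝ)) ∧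
    (∑ β ∈ Finset.range (N + 1), Cab β * Real.exp (-((β : ℝ) / (N : ℝ))) =
        (b - a) * (1 - Real.exp (-1)) ∧
      (b - a) * (1 - Real.exp (-1)) = ∫ x in a..b, Real.exp (-((x - a) / (b - a)))) := by
  have hNne : (N : ℝ) ≠ 0 := by
    have : (0:ℝ) < N := by exact_mod_cast Nat.pos_of_ne_zero (by omega)
    linarith
  have hhpos : 0 < h := by
    rw [hh]; positivity
  set E := Real.exp h with hE
  set F := Real.exp (-h) with hF
  have hE1 : 1 < E := by
    rw [hE]; calc (1:ℝ) = Real.exp 0 := (Real.exp_zero).symm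
    _ < Real.exp h := Real.exp_lt_exp.mpr hhpos
  have hEne1 : E - 1 ≠ 0 := by linarith
  have hEF : E * F = 1 := by rw [hE, hF, ← Real.exp_add]; simp
  have hNh : (N:ℝ) * h = 1 := by rw [hh]; field_simp
  have hFN : F ^ N = Real.exp (-1) := by
    rw [hF, ← Real.exp_nat_mul]; congr 1; linarith [hNh]
  set D := h / (E - 1) with hDdef
  have hD : D * (E - 1) = h := div_mul_cancel₀ h hEne1
  have hmid : ∀ β ∈ Finset.Ico 1 N,
      C β = h + K * ((E - lam) * lam ^ β + (1 - lam * E) * lam ^ (N - β)) := by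
    intro β hβ
    simp only [Finset.mem_Ico] at hβ
    exact hCmid β hβ.1 (by omega)
  set S := ∑ β ∈ Finset.Ico 1 N, lam ^ β with hSdef
  have hgeomS : (lam - 1) * S = lam ^ N - lam := geomIco lam N (by omega)
  -- SUM 1
  have hmidsum1 : ∑ β ∈ Finset.Ico 1 N, C β
      = ((N:ℝ) - 1) * h + K * ((E - lam) * S + (1 - lam * E) * S) := by
    rw [Finset.sum_congr rfl hmid, Finset.sum_add_distrib, Finset.sum_const, Nat.card_Ico,
      ← Finset.mul_sum, Finset.sum_add_distrib, ← Finset.mul_sum, ← Finset.mul_sum, reflectIco]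
    have : ((N - 1 : ℕ) : ℝ) = (N : ℝ) - 1 := by
      push_cast [Nat.cast_sub (by omega : 1 ≤ N)]; ring
    rw [nsmul_eq_mul, this, hSdef]
  have hsum1 : ∑ β ∈ Finset.range (N + 1), C β = 1 := by
    rw [splitSum N (by omega), hmidsum1, hC0, hCN]
    linear_combination hNh + hD - (K * (1 + E)) * hgeomS
  -- SUM 2
  have hexp : ∀ β : ℕ, Real.exp (-((β : ℝ) / (N : ℝ))) = F ^ β := by
    intro β
    rw [hF, ← Real.exp_nat_mul]
    congr 1
    field_simp
    ring_nf
    rw [mul_assoc, hNh]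
    ring
  set T1 := ∑ β ∈ Finset.Ico 1 N, F ^ β with hT1def
  set T2 := ∑ β ∈ Finset.Ico 1 N, (lam * F) ^ β with hT2def
  set U := ∑ β ∈ Finset.Ico 1 N, (lam * E) ^ β with hUdef
  have hgT1 : (F - 1) * T1 = F ^ N - F := geomIco F N (by omega)
  have hgT2 : (lam * F - 1) * T2 = lam ^ N * F ^ N - lam * F := by
    have := geomIco (lam * F) N (by omega)
    rwa [mul_pow] at this
  have hgU : (lam * E - 1) * U = lam ^ N * E ^ N - lam * E := by
    have := geomIco (lam * E) N (by omega)
    rwa [mul_pow] at this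
  have hEFN : E ^ N * F ^ N = 1 := by rw [← mul_pow, hEF, one_pow]
  have hgT1' : (E - 1) * T1 = 1 - E * F ^ N := by
    linear_combination (-E) * hgT1 + (T1 + 1) * hEF
  have hT1fact : h * T1 = D * (1 - E * F ^ N) := by
    linear_combination (-T1) * hD + D * hgT1'
  have hT2fact : (E - lam) * T2 = lam - E * lam ^ N * F ^ N := by
    linear_combination (-E) * hgT2 + (lam * T2 + lam) * hEF
  have hUfact : (1 - lam * E) * (F ^ N * U) = lam * E * F ^ N - lam ^ N := by
    linear_combination (-(F ^ N)) * hgU - lam ^ N * hEFN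
  have hmidterm : ∀ β ∈ Finset.Ico 1 N,
      C β * F ^ β = h * F ^ β + (K * (E - lam)) * (lam * F) ^ β
        + (K * (1 - lam * E)) * (F ^ N * (lam * E) ^ (N - β)) := by
    intro β hβ
    simp only [Finset.mem_Ico] at hβ
    rw [hmid β (by simp only [Finset.mem_Ico]; omega)]
    have hkey : lam ^ (N - β) * F ^ β = F ^ N * (lam * E) ^ (N - β) := by
      have hsplitpow : F ^ N = F ^ (N - β) * F ^ β := by
        rw [← pow_add]; congr 1; omega
      have h2 : F ^ (N - β) * E ^ (N - β) = 1 := by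
        rw [← mul_pow, mul_comm F E, hEF, one_pow]
      rw [hsplitpow, mul_pow]
      linear_combination (-(F ^ β * lam ^ (N - β))) * h2
    rw [mul_pow]
    linear_combination (K * (1 - lam * E)) * hkey
  have hmidsum2 : ∑ β ∈ Finset.Ico 1 N, C β * F ^ β
      = h * T1 + (K * (E - lam)) * T2 + (K * (1 - lam * E)) * (F ^ N * U) := by
    rw [Finset.sum_congr rfl hmidterm, Finset.sum_add_distrib, Finset.sum_add_distrib,
      ← Finset.mul_sum, ← Finset.mul_sum, ← Finset.mul_sum]
    rw [← Finset.mul_sum, reflectIco]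
  have hsum2 : ∑ β ∈ Finset.range (N + 1), C β * F ^ β = 1 - F ^ N := by
    rw [splitSum N (by omega), hmidsum2, hC0, hCN]
    simp only [pow_zero, mul_one]
    linear_combination hT1fact + K * hT2fact + K * hUfact
  -- conclusions
  have hint1 : (b - a) = ∫ _x in a..b, (1 : ℝ) := by
    simp
  have hint2 : (b - a) * (1 - Real.exp (-1)) = ∫ x in a..b, Real.exp (-((x - a) / (b - a))) := by
    have hba : b - a ≠ 0 := by linarith
    have hderiv : ∀ x ∈ Set.uIcc a b,
        HasDerivAt (fun x => -(b - a) * Real.exp (-((x - a) / (b - a))))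
          (Real.exp (-((x - a) / (b - a)))) x := by
      intro x _
      have h1 : HasDerivAt (fun x : ℝ => -((x - a) / (b - a))) (-(1 / (b - a))) x := by
        simpa using (((hasDerivAt_id x).sub_const a).div_const (b - a)).fun_neg
      have h2 : HasDerivAt (fun x => -(b - a) * Real.exp (-((x - a) / (b - a))))
          (-(b - a) * (Real.exp (-((x - a) / (b - a))) * -(1 / (b - a)))) x :=
        (h1.exp).const_mul (-(b - a))
      convert h2 using 1
      have hba2 : (b - a) * (1 / (b - a)) = 1 := by rw [mul_one_div, div_self hba]
      linear_combination (-(Real.exp (-((x - a) / (b - a))))) * hba2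
    have hcont : IntervalIntegrable (fun x => Real.exp (-((x - a) / (b - a))))
        MeasureTheory.volume a b := by
      apply Continuous.intervalIntegrable
      fun_prop
    rw [intervalIntegral.integral_eq_sub_of_hasDerivAt hderiv hcont]
    have : -((b - a) / (b - a)) = (-1 : ℝ) := by field_simp
    rw [this]
    simp
    ring
  refine ⟨⟨?_, hint1⟩, ?_, hint2⟩
  · calc ∑ β ∈ Finset.range (N + 1), Cab β = ∑ β ∈ Finset.range (N + 1), (b - a) * C β := by
          exact Finset.sum_congr rfl fun β _ => hCab β
    _ = (b - a) * ∑ β ∈ Finset.range (N + 1), C β := by rw [Finset.mul_sum]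
    _ = b - a := by rw [hsum1]; ring
  · calc ∑ β ∈ Finset.range (N + 1), Cab β * Real.exp (-((β : ℝ) / (N : ℝ)))
        = ∑ β ∈ Finset.range (N + 1), (b - a) * (C β * F ^ β) := by
          refine Finset.sum_congr rfl fun β _ => ?_
          rw [hCab β, hexp β]; ring
    _ = (b - a) * ∑ β ∈ Finset.range (N + 1), C β * F ^ β := by rw [Finset.mul_sum]
    _ = (b - a) * (1 - Real.exp (-1)) := by rw [hsum2, hFN]
end
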